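/- arXiv:2109.14672 — 6 statements merged into one kernel-verified Lean document; each statement's English description precedes it below -/
import Mathlib

section
/- Let x, y : [0,∞) → [0,∞) be measurable with x differentiable, satisfying x'(t) + y(t) ≤ C(x(t)² + 1) and x(t) ≤ C y(t) for all t ≥ 0, for some constant C > 0. If ∫₀^∞ x(s) ds < ∞, then x is bounded on [0,∞) and x(t) → 0 as t → ∞. -/
/-!
Since `(arctan ∘ x)' = x' / (1 + x²) ≤ C`, the function `arctan (x t) - C t` is antitone. Hence
whenever `x t ≥ ε`, `x` stays above a fixed `δ(ε) > 0` on a window `[t - h(ε), t]` of fixed length,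
which contributes at least `δ h` to the integral of `x`. Integrability makes the tail integrals
small, so this cannot happen for arbitrarily large `t`: `x → 0`, and boundedness follows by
continuity.
-/

open MeasureTheory Filter Topology Set

theorem tendsto_setIntegral_Ici_atTop_zero {f : ℝ → ℝ} {a : ℝ} (hf : IntegrableOn f (Ici a)) :
    Tendsto (fun T => ∫ s in Ici T, f s) atTop (𝓝 0) := by
  have hempty : ⋂ T : ℝ, Ici T = ∅ :=
    eq_empty_of_forall_notMem fun t ht => by linarith [mem_Ici.1 (mem_iInter.1 ht (t + 1))]
  simpa [hempty] using tendsto_setIntegral_of_antitone (fun T => measurableSet_Ici)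
    (fun _ _ h => Ici_subset_Ici.2 h) ⟨a, hf⟩

theorem tendsto_zero_of_integrableOn_Ici {f : ℝ → ℝ} {a : ℝ} (hf₀ : ∀ t, a ≤ t → 0 ≤ f t)
    (hf : IntegrableOn f (Ici a))
    (hpersist : ∀ ε > 0, ∃ δ > 0, ∃ h > 0,
      ∀ s t, a ≤ s → s ≤ t → t ≤ s + h → ε ≤ f t → δ ≤ f s) :
    Tendsto f atTop (𝓝 0) := by
  refine Metric.tendsto_atTop.2 fun ε hε => ?_
  obtain ⟨δ, hδ, h, hh, hlow⟩ := hpersist ε hε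
  obtain ⟨N, hN⟩ := (tendsto_setIntegral_Ici_atTop_zero hf).eventually
    (gt_mem_nhds (mul_pos hδ hh)) |>.and (eventually_ge_atTop a) |>.exists
  refine ⟨N + h, fun t ht => ?_⟩
  have hN₀ : a ≤ t - h := by linarith [hN.2]
  rw [Real.dist_eq, sub_zero, abs_of_nonneg (hf₀ t (by linarith))]
  by_contra! hεt
  have hwindow : δ * h ≤ ∫ s in Icc (t - h) t, f s := by
    have hvol : ∫ _ in Icc (t - h) t, δ = δ * h := by
      simp [Real.volume_real_Icc_of_le (by linarith : t - h ≤ t), mul_comm]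
    rw [← hvol]
    refine setIntegral_mono_on (integrableOn_const (by simp)) (hf.mono_set ?_) measurableSet_Icc
      fun s hs => hlow s t (by linarith [hs.1]) hs.2 (by linarith [hs.1]) hεt
    exact fun s hs => hN₀.trans hs.1
  have htail : ∫ s in Icc (t - h) t, f s ≤ ∫ s in Ici N, f s := by
    refine setIntegral_mono_set (hf.mono_set (Ici_subset_Ici.2 hN.2)) ?_
      (Eventually.of_forall fun s hs => (by linarith [hs.1] : N ≤ s))
    exact (ae_restrict_iff' measurableSet_Ici).2 <| .of_forall fun s hs => hf₀ s (hN.2.trans hs)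
  linarith [hN.1]

theorem arctan_le_arctan_add_mul_of_deriv_le {x x' : ℝ → ℝ} {C : ℝ} {D : Set ℝ}
    (hD : Convex ℝ D) (hderiv : ∀ t ∈ D, HasDerivAt x (x' t) t)
    (hx' : ∀ t ∈ D, x' t ≤ C * (x t ^ 2 + 1)) {s t : ℝ} (hs : s ∈ D) (ht : t ∈ D)
    (hst : s ≤ t) : Real.arctan (x t) ≤ Real.arctan (x s) + C * (t - s) := by
  have hg : ∀ u ∈ D, HasDerivAt (fun u => Real.arctan (x u) - C * u)
      (1 / (1 + x u ^ 2) * x' u - C) u := fun u hu =>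
    (hderiv u hu).arctan.sub (by simpa using (hasDerivAt_id u).const_mul C)
  have hanti : AntitoneOn (fun u => Real.arctan (x u) - C * u) D := by
    refine antitoneOn_of_deriv_nonpos hD (fun u hu => (hg u hu).continuousAt.continuousWithinAt)
      (fun u hu => (hg u (interior_subset hu)).differentiableAt.differentiableWithinAt)
      fun u hu => ?_
    have hu := interior_subset hu
    rw [(hg u hu).deriv, sub_nonpos, one_div_mul_eq_div, div_le_iff₀ (by positivity)]
    linarith [hx' u hu]
  linarith [hanti hs ht hst]

theorem lower_bound_persists_of_arctan_le {x : ℝ → ℝ} {C a : ℝ} (hC : 0 < C)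
    (harctan : ∀ s t, a ≤ s → s ≤ t → Real.arctan (x t) ≤ Real.arctan (x s) + C * (t - s)) :
    ∀ ε > 0, ∃ δ > 0, ∃ h > 0, ∀ s t, a ≤ s → s ≤ t → t ≤ s + h → ε ≤ x t → δ ≤ x s := by
  intro ε hε
  set θ := Real.arctan ε / 2 with hθ_def
  have hθ : 0 < θ := half_pos (Real.arctan_pos.2 hε)
  have hθπ : θ < Real.pi / 2 := by linarith [Real.arctan_lt_pi_div_two ε]
  refine ⟨Real.tan θ, Real.tan_pos_of_pos_of_lt_pi_div_two hθ hθπ, θ / C, by positivity,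
    fun s t hs hst hth hεt => ?_⟩
  rw [← Real.arctan_le_arctan_iff, Real.arctan_tan (by linarith [Real.pi_pos]) hθπ]
  have hCh : C * (t - s) ≤ θ := by
    calc C * (t - s) ≤ C * (θ / C) := by gcongr; linarith
      _ = θ := mul_div_cancel₀ θ hC.ne'
  linarith [harctan s t hs hst, Real.arctan_le_arctan_iff.2 hεt]

theorem exists_forall_le_of_tendsto_atTop {f : ℝ → ℝ} {a l : ℝ} (hcont : ContinuousOn f (Ici a))
    (hlim : Tendsto f atTop (𝓝 l)) : ∃ M, ∀ t, a ≤ t → f t ≤ M := by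
  obtain ⟨N, hN⟩ := eventually_atTop.1 (hlim.eventually (eventually_le_nhds (lt_add_one l)))
  obtain ⟨M, hM⟩ := (isCompact_Icc (b := N)).bddAbove_image (hcont.mono Icc_subset_Ici_self)
  refine ⟨max M (l + 1), fun t ht => ?_⟩
  rcases le_total t N with htN | hNt
  · exact (hM (mem_image_of_mem f ⟨ht, htN⟩)).trans (le_max_left _ _)
  · exact (hN t hNt).trans (le_max_right _ _)

theorem stmt1_general (x x' y : ℝ → ℝ) (C : ℝ) (hC : 0 < C)
    (hxnonneg : ∀ t, 0 ≤ t → 0 ≤ x t)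
    (hynonneg : ∀ t, 0 ≤ t → 0 ≤ y t)
    (hderiv : ∀ t, 0 ≤ t → HasDerivAt x (x' t) t)
    (hineq : ∀ t, 0 ≤ t → x' t + y t ≤ C * (x t ^ 2 + 1))
    (hint : IntegrableOn x (Set.Ici 0)) :
    (∃ M : ℝ, ∀ t, 0 ≤ t → x t ≤ M) ∧ Tendsto x atTop (𝓝 0) := by
  have hx' : ∀ t ∈ Ici (0 : ℝ), x' t ≤ C * (x t ^ 2 + 1) := fun t ht =>
    (le_add_of_nonneg_right (hynonneg t ht)).trans (hineq t ht)
  have harctan : ∀ s t, 0 ≤ s → s ≤ t →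
      Real.arctan (x t) ≤ Real.arctan (x s) + C * (t - s) := fun s t hs hst =>
    arctan_le_arctan_add_mul_of_deriv_le (convex_Ici 0) hderiv hx' hs (hs.trans hst) hst
  have hlim : Tendsto x atTop (𝓝 0) :=
    tendsto_zero_of_integrableOn_Ici hxnonneg hint (lower_bound_persists_of_arctan_le hC harctan)
  have hcont : ContinuousOn x (Ici 0) := fun t ht => (hderiv t ht).continuousAt.continuousWithinAt
  exact ⟨exists_forall_le_of_tendsto_atTop hcont hlim, hlim⟩

/-- Lemma A.1 (first part): if `x' + y ≤ C(x² + 1)`, `x ≤ C y`, and `∫₀^∞ x < ∞`,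
then `x` is bounded and tends to `0` at infinity. -/
theorem stmt1 (x x' y : ℝ → ℝ) (C : ℝ) (hC : 0 < C)
    (hxnonneg : ∀ t, 0 ≤ t → 0 ≤ x t)
    (hynonneg : ∀ t, 0 ≤ t → 0 ≤ y t)
    (hymeas : Measurable y)
    (hderiv : ∀ t, 0 ≤ t → HasDerivAt x (x' t) t)
    (hineq : ∀ t, 0 ≤ t → x' t + y t ≤ C * (x t ^ 2 + 1))
    (hcomp : ∀ t, 0 ≤ t → x t ≤ C * y t)
    (hint : IntegrableOn x (Set.Ici 0)) :
    (∃ M : ℝ, ∀ t, 0 ≤ t → x t ≤ M) ∧ Tendsto x atTop (𝓝 0) :=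
  stmt1_general x x' y C hC hxnonneg hynonneg hderiv hineq hint
end

section
/- Let x, y : [0,∞) → [0,∞) be measurable with x differentiable, satisfying x'(t) + y(t) ≤ C(x(t)² + 1) and x(t) ≤ C y(t) for all t ≥ 0, for some C > 0, and suppose ∫₀^∞ x(s) ds < ∞. Then limsup_{t→∞} ∫_t^{t+a} y(s) ds ≤ C' a for every a > 0, where C' depends only on C. -/
/-!
The inequality `x' ≤ C (x ^ 2 + 1)` says that `arctan x - C t` is nonincreasing, so `x` cannot
rise quickly: if `x t ≥ ε`, then `x ≥ ε / 2` on a window `[t - δ, t]` whose length depends only on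
`ε` and `C`. Since `x` is integrable, this is impossible for large `t`, hence `x → 0`. Integrating
`x' + y ≤ C (x ^ 2 + 1)` over `[t, t + a]` and using `x ^ 2 ≤ x` once `x ≤ 1` gives
`∫_t^{t+a} y ≤ C ∫_t^{t+a} x + C a + x t`, whose right side tends to `C a`; so `C' = C` works.
-/

open MeasureTheory Filter Topology Set Real

theorem tendsto_intervalIntegral_window_atTop_zero {E : Type*} [NormedAddCommGroup E]
    [NormedSpace ℝ E] [CompleteSpace E] {f : ℝ → E} {c : ℝ} (hf : IntegrableOn f (Ici c))
    (a : ℝ) : Tendsto (fun t => ∫ s in t..t + a, f s) atTop (𝓝 0) := by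
  have hlim : Tendsto (fun u => ∫ s in c..u, f s) atTop (𝓝 (∫ s in Ioi c, f s)) :=
    intervalIntegral_tendsto_integral_Ioi c (hf.mono_set Ioi_subset_Ici_self) tendsto_id
  have hdiff := (hlim.comp (tendsto_atTop_add_const_right atTop a tendsto_id)).sub hlim
  rw [sub_self] at hdiff
  refine hdiff.congr' ?_
  filter_upwards [eventually_ge_atTop c, eventually_ge_atTop (c - a)] with t htc hta
  have hint : ∀ u, c ≤ u → IntervalIntegrable f volume c u := fun u hu =>
    (hf.mono_set (uIcc_of_le hu ▸ Icc_subset_Ici_self)).intervalIntegrable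
  exact intervalIntegral.integral_interval_sub_left (hint (t + a) (by linarith)) (hint t htc)

theorem antitoneOn_arctan_comp_sub_mul {x x' : ℝ → ℝ} {C : ℝ} {D : Set ℝ} (hD : Convex ℝ D)
    (hderiv : ∀ t ∈ D, HasDerivAt x (x' t) t) (hx' : ∀ t ∈ D, x' t ≤ C * (x t ^ 2 + 1)) :
    AntitoneOn (fun u => arctan (x u) - C * u) D := by
  have hF : ∀ u ∈ D, HasDerivAt (fun u => arctan (x u) - C * u)
      (1 / (1 + x u ^ 2) * x' u - C) u := fun u hu =>
    ((hasDerivAt_arctan (x u)).comp u (hderiv u hu)).sub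
      (((hasDerivAt_id' u).const_mul C).congr_deriv (mul_one C))
  refine antitoneOn_of_hasDerivWithinAt_nonpos hD
    (fun u hu => (hF u hu).continuousAt.continuousWithinAt)
    (fun u hu => (hF u (interior_subset hu)).hasDerivWithinAt) fun u hu => ?_
  have hpos : (0 : ℝ) < 1 + x u ^ 2 := by positivity
  rw [sub_nonpos, one_div_mul_eq_div, div_le_iff₀ hpos]
  linarith [hx' u (interior_subset hu)]

theorem sub_add_integral_le_integral_of_hasDerivAt {x x' y g : ℝ → ℝ} {a b : ℝ} (hab : a ≤ b)
    (hderiv : ∀ t ∈ Icc a b, HasDerivAt x (x' t) t) (hy : IntervalIntegrable y volume a b)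
    (hg : IntervalIntegrable g volume a b) (h : ∀ t ∈ Ioo a b, x' t + y t ≤ g t) :
    x b - x a + ∫ t in a..b, y t ≤ ∫ t in a..b, g t := by
  have hsub := intervalIntegral.sub_le_integral_of_hasDeriv_right_of_le hab
    (fun t ht => (hderiv t ht).continuousAt.continuousWithinAt)
    (fun t ht => (hderiv t (Ioo_subset_Icc_self ht)).hasDerivWithinAt)
    ((intervalIntegrable_iff_integrableOn_Icc_of_le hab).1 (hg.sub hy))
    (fun t ht => le_sub_iff_add_le.2 (h t ht))
  rw [intervalIntegral.integral_sub hg hy] at hsub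
  linarith

theorem tendsto_atTop_zero_of_antitoneOn_arctan_sub_mul {x : ℝ → ℝ} {C : ℝ} (hC : 0 < C)
    (hx : ∀ t, 0 ≤ t → 0 ≤ x t) (hxint : IntegrableOn x (Ici 0))
    (hF : AntitoneOn (fun u => arctan (x u) - C * u) (Ici 0)) : Tendsto x atTop (𝓝 0) := by
  refine tendsto_order.2 ⟨fun b hb => ?_, fun ε hε => ?_⟩
  · filter_upwards [eventually_ge_atTop 0] with t ht
    exact hb.trans_le (hx t ht)
  set δ := (arctan ε - arctan (ε / 2)) / C
  have hδ : 0 < δ := div_pos (sub_pos.2 (arctan_strictMono (half_lt_self hε))) hC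
  have hCδ : C * δ = arctan ε - arctan (ε / 2) := mul_div_cancel₀ _ hC.ne'
  have hwindow : Tendsto (fun t => ∫ s in (t - δ)..t, x s) atTop (𝓝 0) := by
    simpa [Function.comp_def, sub_eq_add_neg] using
      (tendsto_intervalIntegral_window_atTop_zero hxint δ).comp
        (tendsto_atTop_add_const_right atTop (-δ) tendsto_id)
  filter_upwards [hwindow.eventually (gt_mem_nhds (mul_pos hδ (half_pos hε))),
    eventually_ge_atTop δ] with t hsmall htδ
  by_contra! hlarge
  have hlower : ∀ s ∈ Icc (t - δ) t, ε / 2 ≤ x s := by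
    intro s hs
    have hmono := hF (show 0 ≤ s by linarith [hs.1]) (show 0 ≤ t by linarith) hs.2
    have hεt : arctan ε ≤ arctan (x t) := arctan_strictMono.monotone hlarge
    have hgap : C * (t - s) ≤ C * δ := mul_le_mul_of_nonneg_left (by linarith [hs.1]) hC.le
    exact arctan_strictMono.le_iff_le.1 (by simp only at hmono; linarith)
  have hxI : IntervalIntegrable x volume (t - δ) t :=
    (hxint.mono_set (uIcc_of_le (by linarith : t - δ ≤ t) ▸ fun s hs => by
      simp only [mem_Ici]; linarith [hs.1])).intervalIntegrable
  have hbig := intervalIntegral.integral_mono_on (by linarith) intervalIntegrable_const hxI hlower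
  simp only [intervalIntegral.integral_const, sub_sub_cancel, smul_eq_mul] at hbig
  linarith

theorem eventually_intervalIntegral_le {x x' y : ℝ → ℝ} {C a : ℝ} (hC : 0 ≤ C)
    (hxnonneg : ∀ t, 0 ≤ t → 0 ≤ x t) (hyloc : LocallyIntegrableOn y (Ici 0))
    (hderiv : ∀ t, 0 ≤ t → HasDerivAt x (x' t) t)
    (hineq : ∀ t, 0 ≤ t → x' t + y t ≤ C * (x t ^ 2 + 1)) (hint : IntegrableOn x (Ici 0))
    (ha : 0 ≤ a) (hx1 : ∀ᶠ t in atTop, x t ≤ 1) :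
    ∀ᶠ t in atTop, ∫ s in t..(t + a), y s ≤ C * (∫ s in t..(t + a), x s) + C * a + x t := by
  obtain ⟨T, hT⟩ := eventually_atTop.1 hx1
  filter_upwards [eventually_ge_atTop (max T 0)] with t ht
  have hwin : uIcc t (t + a) ⊆ Ici 0 := by
    rw [uIcc_of_le (by linarith)]
    exact fun s hs => le_trans (le_of_max_le_right ht) hs.1
  have hxI : IntervalIntegrable x volume t (t + a) := (hint.mono_set hwin).intervalIntegrable
  have hyI : IntervalIntegrable y volume t (t + a) :=
    (hyloc.integrableOn_compact_subset hwin isCompact_uIcc).intervalIntegrable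
  have hstep := sub_add_integral_le_integral_of_hasDerivAt (g := fun s => C * x s + C)
    (by linarith) (fun s hs => hderiv s (hwin (Icc_subset_uIcc hs))) hyI
    ((hxI.const_mul C).add intervalIntegrable_const) fun s hs => by
      have hs0 : 0 ≤ s := hwin (Icc_subset_uIcc (Ioo_subset_Icc_self hs))
      have hs1 : x s ≤ 1 := hT s (le_trans (le_of_max_le_left ht) hs.1.le)
      have hsq : x s ^ 2 ≤ x s := by nlinarith [hxnonneg s hs0]
      linarith [hineq s hs0, mul_le_mul_of_nonneg_left hsq hC]
  rw [intervalIntegral.integral_add (hxI.const_mul C) intervalIntegrable_const,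
    intervalIntegral.integral_const_mul, intervalIntegral.integral_const] at hstep
  simp only [add_sub_cancel_left, smul_eq_mul] at hstep
  linarith [hxnonneg (t + a) (by linarith [le_of_max_le_right ht])]

theorem stmt2_general (x x' y : ℝ → ℝ) (C : ℝ) (hC : 0 < C)
    (hxnonneg : ∀ t, 0 ≤ t → 0 ≤ x t)
    (hynonneg : ∀ t, 0 ≤ t → 0 ≤ y t)
    (hyloc : LocallyIntegrableOn y (Set.Ici 0))
    (hderiv : ∀ t, 0 ≤ t → HasDerivAt x (x' t) t)
    (hineq : ∀ t, 0 ≤ t → x' t + y t ≤ C * (x t ^ 2 + 1))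
    (hint : IntegrableOn x (Set.Ici 0)) :
    ∃ C' : ℝ, 0 < C' ∧ ∀ a : ℝ, 0 < a →
      Filter.limsup (fun t => ∫ s in t..(t + a), y s) atTop ≤ C' * a := by
  refine ⟨C, hC, fun a ha => ?_⟩
  have hx0 : Tendsto x atTop (𝓝 0) :=
    tendsto_atTop_zero_of_antitoneOn_arctan_sub_mul hC hxnonneg hint
      (antitoneOn_arctan_comp_sub_mul (convex_Ici 0) hderiv fun t ht => by
        linarith [hineq t ht, hynonneg t ht])
  have hbound := eventually_intervalIntegral_le hC.le hxnonneg hyloc hderiv hineq hint ha.le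
    (hx0.eventually (ge_mem_nhds zero_lt_one))
  have hrhs :
      Tendsto (fun t => C * (∫ s in t..(t + a), x s) + C * a + x t) atTop (𝓝 (C * a)) := by
    simpa using (((tendsto_intervalIntegral_window_atTop_zero hint a).const_mul C).add_const
      (C * a)).add hx0
  have hcobdd : IsCoboundedUnder (· ≤ ·) atTop fun t => ∫ s in t..(t + a), y s :=
    isCoboundedUnder_le_of_eventually_le atTop (x := 0) <| by
      filter_upwards [eventually_ge_atTop 0] with t ht
      exact intervalIntegral.integral_nonneg (by linarith) fun s hs => hynonneg s (ht.trans hs.1)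
  calc limsup (fun t => ∫ s in t..(t + a), y s) atTop
      ≤ limsup (fun t => C * (∫ s in t..(t + a), x s) + C * a + x t) atTop :=
        limsup_le_limsup hbound hcobdd hrhs.isBoundedUnder_le
    _ = C * a := hrhs.limsup_eq

/-- Lemma A.1 (second part): under the same hypotheses, the sliding-window integrals of `y`
satisfy `limsup_{t→∞} ∫_t^{t+a} y ≤ C' a` for every `a > 0`, with `C'` depending only on `C`. -/
theorem stmt2 (x x' y : ℝ → ℝ) (C : ℝ) (hC : 0 < C)
    (hxnonneg : ∀ t, 0 ≤ t → 0 ≤ x t)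
    (hynonneg : ∀ t, 0 ≤ t → 0 ≤ y t)
    (hymeas : Measurable y)
    (hyloc : LocallyIntegrableOn y (Set.Ici 0))
    (hderiv : ∀ t, 0 ≤ t → HasDerivAt x (x' t) t)
    (hineq : ∀ t, 0 ≤ t → x' t + y t ≤ C * (x t ^ 2 + 1))
    (hcomp : ∀ t, 0 ≤ t → x t ≤ C * y t)
    (hint : IntegrableOn x (Set.Ici 0)) :
    ∃ C' : ℝ, 0 < C' ∧ ∀ a : ℝ, 0 < a →
      Filter.limsup (fun t => ∫ s in t..(t + a), y s) atTop ≤ C' * a :=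
  stmt2_general x x' y C hC hxnonneg hynonneg hyloc hderiv hineq hint
end

section
/- Let x, y : [0,∞) → [0,∞) be measurable with x differentiable, and let φ : [0,∞) → [0,∞) be bounded with φ(t) → 0 as t → ∞. Assume x'(t) + y(t) ≤ φ(t)(x(t) + 1) and x(t) ≤ C y(t) for all t ≥ 0, and x(0) ≤ C, for some C > 0. Then x is bounded on [0,∞) and x(t) → 0 as t → ∞. -/
/-!
Because `x ≤ C y`, as soon as `φ ≤ b / (C (1 + b))` the differential inequality becomes the
linear relaxation `x' ≤ (b - x) / (C (1 + b))`, so by Grönwall `x` decays exponentially to below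
any level `b > 0`. Boundedness then follows from continuity on the remaining compact interval.
-/

open Filter Topology Set Real

theorem le_add_sub_mul_exp_of_hasDerivAt_le {f f' : ℝ → ℝ} {k b T : ℝ}
    (hf : ∀ t, T ≤ t → HasDerivAt f (f' t) t) (hf' : ∀ t, T ≤ t → f' t ≤ k * (b - f t))
    {t : ℝ} (ht : T ≤ t) :
    f t ≤ b + (f T - b) * exp (-k * (t - T)) := by
  have hgronwall := le_gronwallBound_of_liminf_deriv_right_le (K := -k) (ε := k * b) (b := t)
    (fun s hs => (hf s hs.1).continuousAt.continuousWithinAt)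
    (fun s hs _ hr => (hf s hs.1).hasDerivWithinAt.liminf_right_slope_le hr) le_rfl
    (fun s hs => by linarith [hf' s hs.1]) t ⟨ht, le_rfl⟩
  refine hgronwall.trans_eq ?_
  rcases eq_or_ne k 0 with rfl | hk
  · simp [gronwallBound_K0]
  · rw [gronwallBound_of_K_ne_0 (neg_ne_zero.2 hk)]
    field_simp
    ring

theorem exists_forall_le_of_continuousOn_Ici_of_tendsto {f : ℝ → ℝ} {a l : ℝ}
    (hf : ContinuousOn f (Ici a)) (hlim : Tendsto f atTop (𝓝 l)) :
    ∃ M, ∀ t, a ≤ t → f t ≤ M := by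
  obtain ⟨T, hT⟩ := eventually_atTop.1 (hlim.eventually (eventually_le_nhds (lt_add_one l)))
  obtain ⟨M, hM⟩ :=
    isCompact_Icc.bddAbove_image (hf.mono (Icc_subset_Ici_self : Icc a T ⊆ Ici a))
  refine ⟨max M (l + 1), fun t ht => ?_⟩
  rcases le_total t T with htT | hTt
  · exact le_max_of_le_left (hM ⟨t, ⟨ht, htT⟩, rfl⟩)
  · exact le_max_of_le_right (hT t hTt)

section Decay

variable {x x' y φ : ℝ → ℝ} {C : ℝ}

theorem deriv_le_of_phi_le (hC : 0 < C) (hxnonneg : ∀ t, 0 ≤ t → 0 ≤ x t)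
    (hineq : ∀ t, 0 ≤ t → x' t + y t ≤ φ t * (x t + 1))
    (hcomp : ∀ t, 0 ≤ t → x t ≤ C * y t) {b t : ℝ} (hb : 0 < b) (ht : 0 ≤ t)
    (hφt : φ t ≤ b / (C * (1 + b))) :
    x' t ≤ 1 / (C * (1 + b)) * (b - x t) := by
  have hy : x t / C ≤ y t := (div_le_iff₀' hC).2 (hcomp t ht)
  have hφx : φ t * (x t + 1) ≤ b / (C * (1 + b)) * (x t + 1) :=
    mul_le_mul_of_nonneg_right hφt (by linarith [hxnonneg t ht])
  calc x' t ≤ b / (C * (1 + b)) * (x t + 1) - x t / C := by linarith [hineq t ht]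
    _ = 1 / (C * (1 + b)) * (b - x t) := by field_simp; ring

theorem eventually_lt_of_phi_tendsto_zero (hC : 0 < C) (hxnonneg : ∀ t, 0 ≤ t → 0 ≤ x t)
    (hφlim : Tendsto φ atTop (𝓝 0))
    (hderiv : ∀ t, 0 ≤ t → HasDerivAt x (x' t) t)
    (hineq : ∀ t, 0 ≤ t → x' t + y t ≤ φ t * (x t + 1))
    (hcomp : ∀ t, 0 ≤ t → x t ≤ C * y t) {a : ℝ} (ha : 0 < a) :
    ∀ᶠ t in atTop, x t < a := by
  set b := a / 2
  set k := 1 / (C * (1 + b))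
  have hb : 0 < b := half_pos ha
  have hk : 0 < k := by positivity
  obtain ⟨T₀, hT₀⟩ := eventually_atTop.1
    (hφlim.eventually (eventually_le_nhds (show (0 : ℝ) < b / (C * (1 + b)) by positivity)))
  set T := max T₀ 0
  have hbound : ∀ t, T ≤ t → x t ≤ b + (x T - b) * exp (-k * (t - T)) :=
    fun t ht => le_add_sub_mul_exp_of_hasDerivAt_le
      (fun s hs => hderiv s ((le_max_right _ _).trans hs))
      (fun s hs => deriv_le_of_phi_le hC hxnonneg hineq hcomp hb ((le_max_right _ _).trans hs)
        (hT₀ s ((le_max_left _ _).trans hs))) ht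
  have hlim : Tendsto (fun t => b + (x T - b) * exp (-k * (t - T))) atTop (𝓝 b) := by
    have hexp : Tendsto (fun t => exp (-k * (t - T))) atTop (𝓝 0) :=
      tendsto_exp_atBot.comp <|
        (tendsto_atTop_add_const_right _ _ tendsto_id).const_mul_atTop_of_neg (neg_neg_of_pos hk)
    simpa using (hexp.const_mul (x T - b)).const_add b
  filter_upwards [eventually_ge_atTop T, hlim.eventually (eventually_lt_nhds (half_lt_self ha))]
    with t hTt hlt using (hbound t hTt).trans_lt hlt

end Decay

theorem stmt3_general (x x' y φ : ℝ → ℝ) (C : ℝ) (hC : 0 < C)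
    (hxnonneg : ∀ t, 0 ≤ t → 0 ≤ x t)
    (hφlim : Tendsto φ atTop (𝓝 0))
    (hderiv : ∀ t, 0 ≤ t → HasDerivAt x (x' t) t)
    (hineq : ∀ t, 0 ≤ t → x' t + y t ≤ φ t * (x t + 1))
    (hcomp : ∀ t, 0 ≤ t → x t ≤ C * y t) :
    (∃ M : ℝ, ∀ t, 0 ≤ t → x t ≤ M) ∧ Tendsto x atTop (𝓝 0) := by
  have hlim : Tendsto x atTop (𝓝 0) := tendsto_order.2
    ⟨fun a ha => (eventually_ge_atTop 0).mono fun t ht => ha.trans_le (hxnonneg t ht),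
     fun a ha => eventually_lt_of_phi_tendsto_zero hC hxnonneg hφlim hderiv hineq hcomp ha⟩
  have hcont : ContinuousOn x (Ici 0) := fun t ht =>
    (hderiv t ht).continuousAt.continuousWithinAt
  exact ⟨exists_forall_le_of_continuousOn_Ici_of_tendsto hcont hlim, hlim⟩

/-- Lemma A.2 (first part): if `x' + y ≤ φ(t)(x + 1)` with `φ` bounded and tending to zero,
`x ≤ C y`, and `x(0) ≤ C`, then `x` is bounded and tends to `0` at infinity. -/
theorem stmt3 (x x' y φ : ℝ → ℝ) (C : ℝ) (hC : 0 < C)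
    (hxnonneg : ∀ t, 0 ≤ t → 0 ≤ x t)
    (hynonneg : ∀ t, 0 ≤ t → 0 ≤ y t)
    (hymeas : Measurable y)
    (hφnonneg : ∀ t, 0 ≤ t → 0 ≤ φ t)
    (hφbdd : ∀ t, 0 ≤ t → φ t ≤ C)
    (hφlim : Tendsto φ atTop (𝓝 0))
    (hderiv : ∀ t, 0 ≤ t → HasDerivAt x (x' t) t)
    (hineq : ∀ t, 0 ≤ t → x' t + y t ≤ φ t * (x t + 1))
    (hcomp : ∀ t, 0 ≤ t → x t ≤ C * y t)
    (hx0 : x 0 ≤ C) :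
    (∃ M : ℝ, ∀ t, 0 ≤ t → x t ≤ M) ∧ Tendsto x atTop (𝓝 0) :=
  stmt3_general x x' y φ C hC hxnonneg hφlim hderiv hineq hcomp
end

section
/- Let x, y : [0,∞) → [0,∞) be measurable with x differentiable, φ : [0,∞) → [0,∞) bounded with φ(t) → 0 as t → ∞, and suppose x'(t) + y(t) ≤ φ(t)(x(t) + 1), x(t) ≤ C y(t), and x(0) ≤ C for some C > 0. Then for every a > 0, lim_{t→∞} ∫_t^{t+a} y(s) ds = 0. -/
/-!
Since `y ≥ x / C`, the hypothesis gives `x' ≤ φ (x + 1) - x / C` with `φ → 0`. A differential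
inequality `f' ≤ k (L - f)` with `k > 0` forces `f` eventually below any `L' > L`, because
`e^{k t} (f t - L)` is antitone. Applied once where `φ ≤ 1/(2C)`, this bounds `x`; then
`φ (x + 1) → 0`, and applied with arbitrarily small `L` it gives `x → 0`. Integrating
`x' + y ≤ φ (x + 1)` over `[t, t + a]` and using `x ≥ 0` yields
`∫_t^{t+a} y ≤ x t + a · sup_{[t, t+a]} φ (x + 1) → 0`.
-/

open MeasureTheory Filter Topology Real Set

theorem le_add_exp_mul_of_hasDerivAt_le_mul_sub {f f' : ℝ → ℝ} {k L T t : ℝ}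
    (hderiv : ∀ s, T ≤ s → HasDerivAt f (f' s) s)
    (hle : ∀ s, T < s → f' s ≤ k * (L - f s))
    (ht : T ≤ t) : f t ≤ L + exp (-(k * (t - T))) * (f T - L) := by
  set g : ℝ → ℝ := fun s => exp (k * s) * (f s - L)
  set g' : ℝ → ℝ := fun s => exp (k * s) * (f' s - k * (L - f s))
  have hg : ∀ s, T ≤ s → HasDerivAt g (g' s) s := fun s hs =>
    ((((hasDerivAt_id' s).const_mul k).exp).mul ((hderiv s hs).sub_const L)).congr_deriv
      (by simp only [g']; ring)
  have hanti : AntitoneOn g (Ici T) := by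
    refine antitoneOn_of_hasDerivWithinAt_nonpos (f' := g') (convex_Ici T)
      (fun s hs => (hg s hs).continuousAt.continuousWithinAt) ?_ ?_ <;> rw [interior_Ici]
    · exact fun s hs => (hg s hs.le).hasDerivWithinAt
    · exact fun s hs => mul_nonpos_of_nonneg_of_nonpos (exp_pos _).le (by linarith [hle s hs])
  have key : exp (k * t) * (f t - L) ≤ exp (k * T) * (f T - L) :=
    hanti (mem_Ici.2 le_rfl) (mem_Ici.2 ht) ht
  calc f t = L + exp (-(k * t)) * (exp (k * t) * (f t - L)) := by
        rw [← mul_assoc, ← exp_add, neg_add_cancel, exp_zero, one_mul, add_sub_cancel]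
    _ ≤ L + exp (-(k * t)) * (exp (k * T) * (f T - L)) := by gcongr
    _ = L + exp (-(k * (t - T))) * (f T - L) := by
        rw [← mul_assoc, ← exp_add]; ring_nf

theorem eventually_lt_of_hasDerivAt_le_mul_sub {f f' : ℝ → ℝ} {k L L' : ℝ} (hk : 0 < k)
    (hderiv : ∀ᶠ t in atTop, HasDerivAt f (f' t) t)
    (hle : ∀ᶠ t in atTop, f' t ≤ k * (L - f t)) (hL : L < L') :
    ∀ᶠ t in atTop, f t < L' := by
  obtain ⟨T, hT⟩ := eventually_atTop.1 (hderiv.and hle)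
  have hdecay : Tendsto (fun t => L + exp (-(k * (t - T))) * (f T - L)) atTop
      (𝓝 (L + 0 * (f T - L))) := by
    refine tendsto_const_nhds.add (Tendsto.mul_const _ (tendsto_exp_atBot.comp ?_))
    exact tendsto_neg_atTop_atBot.comp
      ((tendsto_id.atTop_add tendsto_const_nhds).const_mul_atTop hk)
  filter_upwards [hdecay.eventually_lt_const (by simpa using hL), eventually_ge_atTop T]
    with t hlt ht
  exact (le_add_exp_mul_of_hasDerivAt_le_mul_sub (fun s hs => (hT s hs).1)
    (fun s hs => (hT s hs.le).2) ht).trans_lt hlt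

theorem tendsto_zero_of_hasDerivAt_le_sub_mul {f f' g : ℝ → ℝ} {k : ℝ} (hk : 0 < k)
    (hderiv : ∀ᶠ t in atTop, HasDerivAt f (f' t) t) (hg : Tendsto g atTop (𝓝 0))
    (hle : ∀ᶠ t in atTop, f' t ≤ g t - k * f t) (hf : ∀ᶠ t in atTop, 0 ≤ f t) :
    Tendsto f atTop (𝓝 0) := by
  refine tendsto_order.2 ⟨fun b hb => hf.mono fun t ht => hb.trans_le ht, fun ε hε => ?_⟩
  refine eventually_lt_of_hasDerivAt_le_mul_sub hk hderiv ?_ (half_lt_self hε)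
  have hgsmall := hg.eventually (eventually_le_nhds (by positivity : (0 : ℝ) < k * (ε / 2)))
  filter_upwards [hle, hgsmall] with t hlet hgt
  linarith

theorem integral_le_sub_add_mul_of_hasDerivAt_add_le {f f' y : ℝ → ℝ} {a b B : ℝ}
    (hab : a ≤ b)
    (hderiv : ∀ s ∈ Icc a b, HasDerivAt f (f' s) s) (hy : IntegrableOn y (Icc a b))
    (hle : ∀ s ∈ Ioo a b, f' s + y s ≤ B) :
    ∫ s in a..b, y s ≤ f a - f b + (b - a) * B := by
  have hyint : IntervalIntegrable y volume a b :=
    (intervalIntegrable_iff_integrableOn_Icc_of_le hab).2 hy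
  have hFTC := intervalIntegral.sub_le_integral_of_hasDeriv_right_of_le
    (φ := fun s => B - y s) hab
    (fun s hs => (hderiv s hs).continuousAt.continuousWithinAt)
    (fun s hs => (hderiv s (Ioo_subset_Icc_self hs)).hasDerivWithinAt)
    ((integrableOn_const measure_Icc_lt_top.ne).sub hy)
    (fun s hs => le_sub_iff_add_le.2 (hle s hs))
  rw [intervalIntegral.integral_sub intervalIntegrable_const hyint,
    intervalIntegral.integral_const, smul_eq_mul] at hFTC
  linarith

theorem tendsto_integral_window_of_hasDerivAt_add_le {f f' y h : ℝ → ℝ} {T a : ℝ}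
    (ha : 0 < a)
    (hderiv : ∀ᶠ t in atTop, HasDerivAt f (f' t) t) (hf : Tendsto f atTop (𝓝 0))
    (hf0 : ∀ᶠ t in atTop, 0 ≤ f t) (hy0 : ∀ᶠ t in atTop, 0 ≤ y t)
    (hyloc : LocallyIntegrableOn y (Ici T)) (hh : Tendsto h atTop (𝓝 0))
    (hle : ∀ᶠ t in atTop, f' t + y t ≤ h t) :
    Tendsto (fun t => ∫ s in t..(t + a), y s) atTop (𝓝 0) := by
  refine tendsto_order.2 ⟨fun b hb => ?_, fun ε hε => ?_⟩
  · obtain ⟨T₁, hT₁⟩ := eventually_atTop.1 hy0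
    filter_upwards [eventually_ge_atTop T₁] with t ht
    exact hb.trans_le (intervalIntegral.integral_nonneg (by linarith)
      fun s hs => hT₁ s (ht.trans hs.1))
  · have hhsmall := hh.eventually (eventually_le_nhds (by positivity : (0 : ℝ) < ε / (2 * a)))
    have hgood : ∀ᶠ s in atTop,
        HasDerivAt f (f' s) s ∧ 0 ≤ f s ∧ f' s + y s ≤ ε / (2 * a) ∧ T ≤ s := by
      filter_upwards [hderiv, hf0, hle, hhsmall, eventually_ge_atTop T]
        with s h₁ h₂ h₃ h₄ h₅
      exact ⟨h₁, h₂, h₃.trans h₄, h₅⟩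
    obtain ⟨T₁, hT₁⟩ := eventually_atTop.1 hgood
    filter_upwards [hf.eventually (eventually_lt_nhds (half_pos hε)), eventually_ge_atTop T₁]
      with t hft ht
    have hwindow := integral_le_sub_add_mul_of_hasDerivAt_add_le (by linarith : t ≤ t + a)
      (fun s hs => (hT₁ s (ht.trans hs.1)).1)
      (hyloc.integrableOn_compact_subset (fun s hs => (hT₁ s (ht.trans hs.1)).2.2.2)
        isCompact_Icc)
      (fun s hs => (hT₁ s (ht.trans hs.1.le)).2.2.1)
    have hfa : 0 ≤ f (t + a) := (hT₁ (t + a) (by linarith)).2.1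
    have hεa : (t + a - t) * (ε / (2 * a)) = ε / 2 := by field_simp; ring
    linarith

theorem stmt4_general (x x' y φ : ℝ → ℝ) (C : ℝ) (hC : 0 < C)
    (hxnonneg : ∀ t, 0 ≤ t → 0 ≤ x t)
    (hynonneg : ∀ t, 0 ≤ t → 0 ≤ y t)
    (hyloc : LocallyIntegrableOn y (Set.Ici 0))
    (hφlim : Tendsto φ atTop (𝓝 0))
    (hderiv : ∀ t, 0 ≤ t → HasDerivAt x (x' t) t)
    (hineq : ∀ t, 0 ≤ t → x' t + y t ≤ φ t * (x t + 1))
    (hcomp : ∀ t, 0 ≤ t → x t ≤ C * y t) :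
    ∀ a : ℝ, 0 < a →
      Tendsto (fun t => ∫ s in t..(t + a), y s) atTop (𝓝 0) := by
  have hx' : ∀ t, 0 ≤ t → x' t ≤ φ t * (x t + 1) - C⁻¹ * x t := fun t ht => by
    have : C⁻¹ * x t ≤ y t := by rw [inv_mul_le_iff₀ hC]; exact hcomp t ht
    linarith [hineq t ht]
  have hderiv' : ∀ᶠ t in atTop, HasDerivAt x (x' t) t := eventually_atTop.2 ⟨0, hderiv⟩
  have hx0 : ∀ᶠ t in atTop, 0 ≤ x t := eventually_atTop.2 ⟨0, hxnonneg⟩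
  have hxbdd : ∀ᶠ t in atTop, x t < 2 := by
    have hk : 0 < (2 * C)⁻¹ := by positivity
    refine eventually_lt_of_hasDerivAt_le_mul_sub hk hderiv' (L := 1) ?_ one_lt_two
    filter_upwards [eventually_ge_atTop 0, hφlim.eventually (eventually_le_nhds hk)]
      with t ht hφt
    have hforce := mul_le_mul_of_nonneg_right hφt (by linarith [hxnonneg t ht] : 0 ≤ x t + 1)
    have hdrift := hx' t ht
    rw [show C⁻¹ = 2 * (2 * C)⁻¹ by field_simp] at hdrift
    linarith
  have hxlim : Tendsto x atTop (𝓝 0) := by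
    refine tendsto_zero_of_hasDerivAt_le_sub_mul (inv_pos.2 hC) hderiv'
      (hφlim.zero_mul_isBoundedUnder_le (isBoundedUnder_of_eventually_le (a := 3) ?_))
      (eventually_atTop.2 ⟨0, hx'⟩) hx0
    filter_upwards [hx0, hxbdd] with t h0 h2
    rw [Function.comp_apply, Real.norm_of_nonneg (by linarith)]
    linarith
  intro a ha
  exact tendsto_integral_window_of_hasDerivAt_add_le ha hderiv' hxlim hx0
    (eventually_atTop.2 ⟨0, hynonneg⟩) hyloc (by simpa using hφlim.mul (hxlim.add_const 1))
    (eventually_atTop.2 ⟨0, hineq⟩)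

/-- Lemma A.2 (second part): under the same hypotheses, for every `a > 0` the sliding-window
integrals `∫_t^{t+a} y` tend to `0` as `t → ∞`. -/
theorem stmt4 (x x' y φ : ℝ → ℝ) (C : ℝ) (hC : 0 < C)
    (hxnonneg : ∀ t, 0 ≤ t → 0 ≤ x t)
    (hynonneg : ∀ t, 0 ≤ t → 0 ≤ y t)
    (hymeas : Measurable y)
    (hyloc : LocallyIntegrableOn y (Set.Ici 0))
    (hφnonneg : ∀ t, 0 ≤ t → 0 ≤ φ t)
    (hφbdd : ∀ t, 0 ≤ t → φ t ≤ C)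
    (hφlim : Tendsto φ atTop (𝓝 0))
    (hderiv : ∀ t, 0 ≤ t → HasDerivAt x (x' t) t)
    (hineq : ∀ t, 0 ≤ t → x' t + y t ≤ φ t * (x t + 1))
    (hcomp : ∀ t, 0 ≤ t → x t ≤ C * y t)
    (hx0 : x 0 ≤ C) :
    ∀ a : ℝ, 0 < a →
      Tendsto (fun t => ∫ s in t..(t + a), y s) atTop (𝓝 0) :=
  stmt4_general x x' y φ C hC hxnonneg hynonneg hyloc hφlim hderiv hineq hcomp
end

section
/- Let x : [0,∞) → [0,∞) be differentiable with x'(t) ≤ C(x(t)² + 1) for all t, and suppose for some ε ∈ (0,1] and t₀ > 0 that ∫_t^{t+2√ε} x(s) ds ≤ ε for all t ≥ t₀. Then for all t₁ ≥ t₀ and t₂ ∈ [t₁, t₁ + 2√ε], x(t₂) ≤ e^{Cε}(x(t₁) + 2C√ε). -/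
/-!
Read `x' ≤ C (x² + 1)` as the linear inequality `x' ≤ (C x) x + C`. Gronwall's lemma with the
integrating factor `exp (-∫ C x)` gives
`x t₂ ≤ exp (C ∫_{t₁}^{t₂} x) (x t₁ + C (t₂ - t₁))`,
and the window hypothesis bounds `∫_{t₁}^{t₂} x ≤ ε` since `x ≥ 0` and `t₂ ≤ t₁ + 2√ε`.
-/

open MeasureTheory Real Set intervalIntegral

section Gronwall

variable {u u' k : ℝ → ℝ} {a b c : ℝ}

/-- The derivative is `e^{-K}(u' - k u) - c ≤ (e^{-K} - 1) c ≤ 0`, with `K t = ∫_a^t k ≥ 0`. -/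
theorem antitoneOn_exp_neg_primitive_mul_sub (hu : ContinuousOn u (Icc a b))
    (hu' : ∀ t ∈ Ioo a b, HasDerivAt u (u' t) t) (hk : ContinuousOn k (Icc a b))
    (hk0 : ∀ t ∈ Icc a b, 0 ≤ k t) (hc : 0 ≤ c)
    (hbound : ∀ t ∈ Ioo a b, u' t ≤ k t * u t + c) :
    AntitoneOn (fun t => exp (-∫ s in a..t, k s) * u t - c * (t - a)) (Icc a b) := by
  have hK_nonneg : ∀ t ∈ Icc a b, 0 ≤ ∫ s in a..t, k s := fun t ht =>
    integral_nonneg ht.1 fun s hs => hk0 s ⟨hs.1, hs.2.trans ht.2⟩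
  have hK_cont : ContinuousOn (fun t => ∫ s in a..t, k s) (Icc a b) := by
    rcases le_total a b with hab | hab
    · simpa [uIcc_of_le hab] using continuousOn_primitive_interval (hk.integrableOn_Icc.mono_set
        (uIcc_of_le hab).subset)
    · exact (subsingleton_Icc_of_ge hab).continuousOn _
  have hK_deriv : ∀ t ∈ Ioo a b, HasDerivAt (fun t => ∫ s in a..t, k s) (k t) t := fun t ht =>
    integral_hasDerivAt_right
      ((hk.mono (uIcc_of_le ht.1.le ▸ Icc_subset_Icc_right ht.2.le)).intervalIntegrable)
      ((hk.mono Ioo_subset_Icc_self).stronglyMeasurableAtFilter isOpen_Ioo t ht)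
      (hk.continuousAt (Icc_mem_nhds ht.1 ht.2))
  have hH_deriv : ∀ t ∈ Ioo a b,
      HasDerivAt (fun t => exp (-∫ s in a..t, k s) * u t - c * (t - a))
        (exp (-∫ s in a..t, k s) * (u' t - k t * u t) - c) t := fun t ht =>
    ((((hK_deriv t ht).neg.exp).mul (hu' t ht)).sub
      (((hasDerivAt_id t).sub_const a).const_mul c)).congr_deriv (by simp only [Pi.neg_apply]; ring)
  refine antitoneOn_of_deriv_nonpos (convex_Icc a b) ?_ ?_ ?_
  · exact (hK_cont.neg.rexp.mul hu).sub
      (continuousOn_const.mul (continuousOn_id.sub continuousOn_const))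
  · rw [interior_Icc]
    exact fun t ht => (hH_deriv t ht).differentiableAt.differentiableWithinAt
  · rw [interior_Icc]
    intro t ht
    rw [(hH_deriv t ht).deriv]
    have hexp_le_one : exp (-∫ s in a..t, k s) ≤ 1 :=
      exp_le_one_iff.2 (neg_nonpos.2 (hK_nonneg t (Ioo_subset_Icc_self ht)))
    have := mul_le_mul_of_nonneg_left (hbound t ht) (exp_pos (-∫ s in a..t, k s)).le
    nlinarith

theorem le_exp_integral_mul_of_deriv_le_mul_add (hab : a ≤ b) (hu : ContinuousOn u (Icc a b))
    (hu' : ∀ t ∈ Ioo a b, HasDerivAt u (u' t) t) (hk : ContinuousOn k (Icc a b))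
    (hk0 : ∀ t ∈ Icc a b, 0 ≤ k t) (hc : 0 ≤ c)
    (hbound : ∀ t ∈ Ioo a b, u' t ≤ k t * u t + c) :
    u b ≤ exp (∫ t in a..b, k t) * (u a + c * (b - a)) := by
  have := antitoneOn_exp_neg_primitive_mul_sub hu hu' hk hk0 hc hbound
    (left_mem_Icc.2 hab) (right_mem_Icc.2 hab) hab
  simp only [integral_same, neg_zero, exp_zero, one_mul, sub_self, mul_zero, sub_zero] at this
  calc u b = exp (∫ t in a..b, k t) * (exp (-∫ t in a..b, k t) * u b) := by
        rw [← mul_assoc, ← exp_add, add_neg_cancel, exp_zero, one_mul]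
    _ ≤ exp (∫ t in a..b, k t) * (u a + c * (b - a)) := by gcongr; linarith

end Gronwall

theorem stmt5_general (x x' : ℝ → ℝ) (C ε t₀ : ℝ) (hC : 0 < C)
    (ht₀ : 0 < t₀)
    (hxnonneg : ∀ t, 0 ≤ t → 0 ≤ x t)
    (hderiv : ∀ t, 0 ≤ t → HasDerivAt x (x' t) t)
    (hineq : ∀ t, 0 ≤ t → x' t ≤ C * (x t ^ 2 + 1))
    (hwin : ∀ t, t₀ ≤ t → ∫ s in t..(t + 2 * Real.sqrt ε), x s ≤ ε) :
    ∀ t₁, t₀ ≤ t₁ → ∀ t₂ ∈ Set.Icc t₁ (t₁ + 2 * Real.sqrt ε),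
      x t₂ ≤ Real.exp (C * ε) * (x t₁ + 2 * C * Real.sqrt ε) := by
  intro t₁ ht₁ t₂ ⟨h12, h2b⟩
  have hpos : ∀ t, t₁ ≤ t → 0 ≤ t := fun t ht => ht₀.le.trans (ht₁.trans ht)
  have hx_cont : ContinuousOn x (Ici t₁) := fun t ht =>
    (hderiv t (hpos t ht)).continuousAt.continuousWithinAt
  have hx_int : ∫ s in t₁..t₂, x s ≤ ε :=
    (integral_mono_interval le_rfl h12 h2b
      (ae_restrict_of_forall_mem measurableSet_Ioc fun s hs => hxnonneg s (hpos s hs.1.le))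
      ((hx_cont.mono fun s hs => (uIcc_of_le (h12.trans h2b) ▸ hs).1).intervalIntegrable)).trans
      (hwin t₁ ht₁)
  have hgronwall := le_exp_integral_mul_of_deriv_le_mul_add (k := fun t => C * x t) h12
    (hx_cont.mono Icc_subset_Ici_self) (fun t ht => hderiv t (hpos t ht.1.le))
    (continuousOn_const.mul (hx_cont.mono Icc_subset_Ici_self))
    (fun t ht => mul_nonneg hC.le (hxnonneg t (hpos t ht.1))) hC.le
    (fun t ht => (hineq t (hpos t ht.1.le)).trans_eq (by ring))
  rw [intervalIntegral.integral_const_mul] at hgronwall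
  calc x t₂ ≤ exp (C * ∫ s in t₁..t₂, x s) * (x t₁ + C * (t₂ - t₁)) := hgronwall
    _ ≤ exp (C * ε) * (x t₁ + 2 * C * Real.sqrt ε) := by
      have hx₁ := hxnonneg t₁ (hpos t₁ le_rfl)
      refine mul_le_mul (by gcongr) (by nlinarith) (by nlinarith) (exp_pos _).le

/-- Gronwall step: if `x' ≤ C(x² + 1)` and `∫_t^{t+2√ε} x ≤ ε` for `t ≥ t₀`, then for
`t₁ ≥ t₀` and `t₂ ∈ [t₁, t₁ + 2√ε]` one has `x(t₂) ≤ e^{Cε}(x(t₁) + 2C√ε)`. -/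
theorem stmt5 (x x' : ℝ → ℝ) (C ε t₀ : ℝ) (hC : 0 < C)
    (hε : ε ∈ Set.Ioc (0:ℝ) 1) (ht₀ : 0 < t₀)
    (hxnonneg : ∀ t, 0 ≤ t → 0 ≤ x t)
    (hderiv : ∀ t, 0 ≤ t → HasDerivAt x (x' t) t)
    (hineq : ∀ t, 0 ≤ t → x' t ≤ C * (x t ^ 2 + 1))
    (hwin : ∀ t, t₀ ≤ t → ∫ s in t..(t + 2 * Real.sqrt ε), x s ≤ ε) :
    ∀ t₁, t₀ ≤ t₁ → ∀ t₂ ∈ Set.Icc t₁ (t₁ + 2 * Real.sqrt ε),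
      x t₂ ≤ Real.exp (C * ε) * (x t₁ + 2 * C * Real.sqrt ε) :=
  stmt5_general x x' C ε t₀ hC ht₀ hxnonneg hderiv hineq hwin
end

section
/- Let ψ : [0,∞) → [0,∞) be differentiable with ψ(0) = 0, and suppose there are constants C > 0, p > 2 such that for all t ≥ 0, (1+ψ(t))^{2/(p+2)} ≤ C(1 + t^{1-2/(p+2)} M(t)^{2/(p+2)} + t^{1-(p²-2)/(p(p+2))} M(t)^{(p²-2)/(p(p+2))} + t^{1-(3p-2)/(2p(p+2))} M(t)^{(3p-2)/(2p(p+2))} + t), where M(t) = ∫₀^t (1+ψ(s)) ds satisfies M(t) ≤ C t for all t ≥ 1. Then there exists a constant C_p such that 1 + ψ(t) ≤ C_p t^{(p+2)/2} for all t ≥ 1. -/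
open MeasureTheory Filter Topology

/-- Algebraic growth: if `(1+ψ)^{2/(p+2)}` is bounded by the stated combination of powers of
`t` and of `M(t) = ∫₀ᵗ (1+ψ)`, with `M(t) ≤ C t` for `t ≥ 1`, then
`1 + ψ(t) ≤ C_p t^{(p+2)/2}` for `t ≥ 1`. -/
theorem stmt7 (ψ ψ' : ℝ → ℝ) (C p : ℝ) (hC : 0 < C) (hp : 2 < p)
    (hψnonneg : ∀ t, 0 ≤ t → 0 ≤ ψ t)
    (hderiv : ∀ t, 0 ≤ t → HasDerivAt ψ (ψ' t) t)
    (hψ0 : ψ 0 = 0)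
    (M : ℝ → ℝ) (hM : ∀ t, M t = ∫ s in (0:ℝ)..t, (1 + ψ s))
    (hMlin : ∀ t, 1 ≤ t → M t ≤ C * t)
    (hmain : ∀ t, 0 ≤ t →
      (1 + ψ t) ^ ((2:ℝ) / (p + 2)) ≤
        C * (1 + t ^ (1 - (2:ℝ) / (p + 2)) * (M t) ^ ((2:ℝ) / (p + 2))
          + t ^ (1 - (p ^ 2 - 2) / (p * (p + 2))) * (M t) ^ ((p ^ 2 - 2) / (p * (p + 2)))
          + t ^ (1 - (3 * p - 2) / (2 * p * (p + 2))) * (M t) ^ ((3 * p - 2) / (2 * p * (p + 2)))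
          + t)) :
    ∃ Cp : ℝ, 0 < Cp ∧ ∀ t, 1 ≤ t → 1 + ψ t ≤ Cp * t ^ ((p + 2) / 2) := by
  have hp0 : 0 < p := by linarith
  have hp2 : 0 < p + 2 := by linarith
  set a1 : ℝ := (2:ℝ) / (p + 2) with ha1d
  set a2 : ℝ := (p ^ 2 - 2) / (p * (p + 2)) with ha2d
  set a3 : ℝ := (3 * p - 2) / (2 * p * (p + 2)) with ha3d
  have ha1 : 0 < a1 := by positivity
  have ha2 : 0 < a2 := div_pos (by nlinarith) (by positivity)
  have ha3 : 0 < a3 := div_pos (by nlinarith) (by positivity)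
  set K : ℝ := C * (2 + C ^ a1 + C ^ a2 + C ^ a3) with hK
  have hKpos : 0 < K := by positivity
  refine ⟨K ^ ((p + 2) / 2), by positivity, fun t ht => ?_⟩
  have ht0 : (0:ℝ) ≤ t := by linarith
  have htpos : (0:ℝ) < t := by linarith
  have hψt : 0 ≤ ψ t := hψnonneg t ht0
  have hMt : 0 ≤ M t := by
    rw [hM]
    apply intervalIntegral.integral_nonneg ht0
    intro u hu
    have := hψnonneg u hu.1
    linarith
  have hMC : M t ≤ C * t := hMlin t ht
  have bound : ∀ a : ℝ, 0 < a → t ^ (1 - a) * (M t) ^ a ≤ C ^ a * t := by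
    intro a ha
    have h1 : (M t) ^ a ≤ (C * t) ^ a := Real.rpow_le_rpow hMt hMC ha.le
    calc t ^ (1 - a) * (M t) ^ a ≤ t ^ (1 - a) * (C * t) ^ a :=
          mul_le_mul_of_nonneg_left h1 (Real.rpow_nonneg ht0 _)
      _ = C ^ a * t := by
          rw [Real.mul_rpow hC.le ht0, ← mul_assoc, mul_comm (t ^ (1 - a)) (C ^ a), mul_assoc,
            ← Real.rpow_add htpos]
          norm_num
  have hmain' := hmain t ht0
  have hrhs : C * (1 + t ^ (1 - a1) * (M t) ^ a1 + t ^ (1 - a2) * (M t) ^ a2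
      + t ^ (1 - a3) * (M t) ^ a3 + t) ≤ K * t := by
    have b1 := bound a1 ha1
    have b2 := bound a2 ha2
    have b3 := bound a3 ha3
    have hsum : 1 + t ^ (1 - a1) * (M t) ^ a1 + t ^ (1 - a2) * (M t) ^ a2
        + t ^ (1 - a3) * (M t) ^ a3 + t ≤ (2 + C ^ a1 + C ^ a2 + C ^ a3) * t := by
      nlinarith
    calc C * (1 + t ^ (1 - a1) * (M t) ^ a1 + t ^ (1 - a2) * (M t) ^ a2
          + t ^ (1 - a3) * (M t) ^ a3 + t)
        ≤ C * ((2 + C ^ a1 + C ^ a2 + C ^ a3) * t) :=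
          mul_le_mul_of_nonneg_left hsum hC.le
      _ = K * t := by rw [hK]; ring
  have hcomb : (1 + ψ t) ^ a1 ≤ K * t := le_trans hmain' hrhs
  have h1ψ : (0:ℝ) ≤ 1 + ψ t := by linarith
  have key : 1 + ψ t ≤ (K * t) ^ ((p + 2) / 2) := by
    have h := Real.rpow_le_rpow (Real.rpow_nonneg h1ψ a1) hcomb
      (by positivity : (0:ℝ) ≤ (p + 2) / 2)
    rwa [← Real.rpow_mul h1ψ, ha1d, show 2 / (p + 2) * ((p + 2) / 2) = 1 by
      field_simp, Real.rpow_one] at h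
  calc 1 + ψ t ≤ (K * t) ^ ((p + 2) / 2) := key
    _ = K ^ ((p + 2) / 2) * t ^ ((p + 2) / 2) := Real.mul_rpow hKpos.le ht0
end
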